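/- Let U : ℝ → ℝ be continuous, strictly increasing, with derivative u satisfying u' > 0 on an open interval J. Let two flows i, j with efficiencies c_i, c_j > 0 receive shares s_i > 0 and s_j, with both rates c_i·s_i and c_j·s_j lying in J, and suppose c_i·u(c_i·s_i) = c_j·u(c_j·s_j). Then for sufficiently small Δs > 0, U(c_i·(s_i − Δs)) + U(c_j·(s_j + Δs)) > U(c_i·s_i) + U(c_j·s_j). -/
import Mathlib


/-- If two flows operate where the marginal utility `u` is strictly
increasing (`u' > 0` on the open interval `(a,b)`) and have equal weighted marginals,
then transferring a sufficiently small amount of resource strictly improves total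
utility. -/
theorem stmt_13 (U u u' : ℝ → ℝ) (a b : ℝ)
    (hUc : Continuous U) (hUm : StrictMono U)
    (hderiv : ∀ x, HasDerivAt U (u x) x)
    (hd2 : ∀ x ∈ Set.Ioo a b, HasDerivAt u (u' x) x)
    (hpos : ∀ x ∈ Set.Ioo a b, 0 < u' x)
    (ci cj si sj : ℝ) (hci : 0 < ci) (hcj : 0 < cj) (hsi : 0 < si)
    (hri : ci * si ∈ Set.Ioo a b) (hrj : cj * sj ∈ Set.Ioo a b)
    (heq : ci * u (ci * si) = cj * u (cj * sj)) :
    ∃ δ > 0, ∀ Δs : ℝ, 0 < Δs → Δs < δ →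
      U (ci * si) + U (cj * sj) < U (ci * (si - Δs)) + U (cj * (sj + Δs)) := by
  -- u is strictly monotone on (a,b)
  have humono : StrictMonoOn u (Set.Ioo a b) := by
    apply strictMonoOn_of_deriv_pos (convex_Ioo a b)
    · exact fun x hx => (hd2 x hx).continuousAt.continuousWithinAt
    · intro x hx
      rw [interior_Ioo] at hx
      rw [(hd2 x hx).deriv]
      exact hpos x hx
  obtain ⟨hai, hib⟩ := hri
  obtain ⟨haj, hjb⟩ := hrj
  set δ : ℝ := min ((ci * si - a) / ci) ((b - cj * sj) / cj) with hδ
  have hδpos : 0 < δ :=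
    lt_min (div_pos (by linarith) hci) (div_pos (by linarith) hcj)
  refine ⟨δ, hδpos, ?_⟩
  intro Δs hΔpos hΔδ
  set f : ℝ → ℝ := fun Δ => U (ci * (si - Δ)) + U (cj * (sj + Δ)) with hf
  -- derivative of f
  have hfd : ∀ x : ℝ, HasDerivAt f
      (u (ci * (si - x)) * (-ci) + u (cj * (sj + x)) * cj) x := by
    intro x
    have h1 : HasDerivAt (fun Δ : ℝ => ci * (si - Δ)) (-ci) x := by
      simpa using ((hasDerivAt_id x).const_sub si).const_mul ci
    have h2 : HasDerivAt (fun Δ : ℝ => cj * (sj + Δ)) cj x := by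
      simpa using ((hasDerivAt_id x).const_add sj).const_mul cj
    exact ((hderiv _).comp x h1).add ((hderiv _).comp x h2)
  -- points stay in (a,b)
  have hmemi : ∀ x ∈ Set.Ioo 0 δ, ci * (si - x) ∈ Set.Ioo a b := by
    intro x ⟨hx0, hxδ⟩
    constructor
    · have : x < (ci * si - a) / ci := lt_of_lt_of_le hxδ (min_le_left _ _)
      have := (lt_div_iff₀ hci).mp this
      nlinarith
    · nlinarith
  have hmemj : ∀ x ∈ Set.Ioo 0 δ, cj * (sj + x) ∈ Set.Ioo a b := by
    intro x ⟨hx0, hxδ⟩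
    constructor
    · nlinarith
    · have : x < (b - cj * sj) / cj := lt_of_lt_of_le hxδ (min_le_right _ _)
      have := (lt_div_iff₀ hcj).mp this
      nlinarith
  -- f' > 0 on (0, δ)
  have hderivpos : ∀ x ∈ Set.Ioo (0:ℝ) δ, 0 < deriv f x := by
    intro x ⟨hx0, hxδ⟩
    rw [(hfd x).deriv]
    have hxmem : x ∈ Set.Ioo 0 δ := ⟨hx0, hxδ⟩
    have h1 : u (ci * (si - x)) < u (ci * si) := by
      apply humono (hmemi x hxmem) ⟨hai, hib⟩
      nlinarith
    have h2 : u (cj * sj) < u (cj * (sj + x)) := by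
      apply humono ⟨haj, hjb⟩ (hmemj x hxmem)
      nlinarith
    have h3 : ci * u (ci * (si - x)) < ci * u (ci * si) := by nlinarith
    have h4 : cj * u (cj * sj) < cj * u (cj * (sj + x)) := by nlinarith
    nlinarith
  -- f strictly monotone on [0, δ]
  have hfmono : StrictMonoOn f (Set.Icc 0 δ) := by
    apply strictMonoOn_of_deriv_pos (convex_Icc 0 δ)
    · exact (((hUc.comp (continuous_const.mul (continuous_const.sub continuous_id))).add (hUc.comp (continuous_const.mul (continuous_const.add continuous_id)))).continuousOn)
    · intro x hx
      rw [interior_Icc] at hx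
      exact hderivpos x hx
  have := hfmono (Set.mem_Icc.mpr ⟨le_refl 0, le_of_lt hδpos⟩)
    (Set.mem_Icc.mpr ⟨le_of_lt hΔpos, le_of_lt hΔδ⟩) hΔpos
  simpa [hf] using this
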